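/- Let ε > 0, let N ≥ 1 be an integer, and let x be a strictly ordered particle solution on [0,∞). Then for every index i = 0,…,N−1 and every t ≥ 0, d_i(t) ≥ d_i(0)·e^{−t/(2ε³)} + (2ε/N)·(1 − e^{−t/(2ε³)}); in particular the particles never collide at finite times. -/

import Mathlib

open MeasureTheory Real Set
open scoped ENNReal

/-- Scaled Morse potential `W_ε(x) = (1/(2ε)) e^{-|x|/ε}`. -/
noncomputable def Morse (ε x : ℝ) : ℝ := (1 / (2 * ε)) * Real.exp (-|x| / ε)

/-- Derivative of the scaled Morse potential,
`W_ε'(x) = -(1/(2ε²)) sign(x) e^{-|x|/ε}`. -/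
noncomputable def Morse' (ε x : ℝ) : ℝ :=
  -(1 / (2 * ε ^ 2)) * Real.sign x * Real.exp (-|x| / ε)

/-- Right-hand side of the particle ODE system:
`(1/N) ∑_{k=0}^{N-1} (W_ε(x_{k+1}-x_i) - W_ε(x_k-x_i))/(x_{k+1}-x_k)`. -/
noncomputable def particleRHS (ε : ℝ) (N : ℕ) (x : ℕ → ℝ) (i : ℕ) : ℝ :=
  (1 / (N : ℝ)) * ∑ k ∈ Finset.range N,
    (Morse ε (x (k + 1) - x i) - Morse ε (x k - x i)) / (x (k + 1) - x k)

/-- A strictly ordered particle solution on `[0,∞)`:  a differentiable curve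
`x = (x_0,…,x_N)` with `x_0(t) < ⋯ < x_N(t)` for all `t ≥ 0`, solving the particle ODE. -/
def IsParticleSol (ε : ℝ) (N : ℕ) (x : ℝ → ℕ → ℝ) : Prop :=
  (∀ t : ℝ, 0 ≤ t → ∀ i < N, x t i < x t (i + 1)) ∧
  (∀ i ≤ N, ∀ t : ℝ, 0 ≤ t →
    HasDerivWithinAt (fun s => x s i) (particleRHS ε N (x t) i) (Set.Ici 0) t)

/-- The discrete (piecewise constant) density
`ρ^N(y,t) = ∑_{k=0}^{N-1} R_k(t) 1_{[x_k(t), x_{k+1}(t))}(y)` with `R_k = 1/(N d_k)`. -/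
noncomputable def discDens (N : ℕ) (x : ℝ → ℕ → ℝ) (y t : ℝ) : ℝ :=
  ∑ k ∈ Finset.range N,
    Set.indicator (Set.Ico (x t k) (x t (k + 1)))
      (fun _ => 1 / ((N : ℝ) * (x t (k + 1) - x t k))) y

/-- Convolution in the space variable: `(W ∗ ρ)(x) = ∫ W(x-y) ρ(y) dy`. -/
noncomputable def conv (W ρ : ℝ → ℝ) (x : ℝ) : ℝ := ∫ y, W (x - y) * ρ y

/-!
Subtracting the equations of particles `i` and `i + 1`, the cell `[x_i, x_{i+1}]` itself pushes
them apart at rate at least `1/(Nε²) - d_i/(2ε³)`, because `(1 - e^{-u})/u ≥ 1 - u/2`. Every other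
cell lies on one side of both particles, where the kernel is a single exponential; the second
difference of `e^{-y/ε}` over two disjoint intervals is at most the product of their lengths
over `ε²`, so each such cell slows the separation by at most `d_i/(2Nε³)`. Hence
`d_i' ≥ 1/(Nε²) - d_i/(2ε³)`, and Gronwall's inequality gives the bound, which relaxes to
`2ε/N`.
-/

theorem exp_relaxation_le_of_hasDerivWithinAt {f f' : ℝ → ℝ} {a b α c : ℝ} (hc : c ≠ 0)
    (hab : a ≤ b) (hf : ∀ s ∈ Icc a b, HasDerivWithinAt f (f' s) (Ici a) s)
    (bound : ∀ s ∈ Ico a b, α - c * f s ≤ f' s) :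
    f a * exp (-c * (b - a)) + α / c * (1 - exp (-c * (b - a))) ≤ f b := by
  -- Gronwall's upper bound applied to `-f`, whose growth rate is `-c`.
  have h := le_gronwallBound_of_liminf_deriv_right_le (f := fun s => -f s) (f' := fun s => -f' s)
    (δ := -f a) (K := -c) (ε := -α)
    (fun s hs => (hf s hs).neg.continuousWithinAt.mono Icc_subset_Ici_self)
    (fun s hs r hr => by
      simpa only [slope_def_module, smul_eq_mul, Pi.neg_apply] using
        ((hf s (Ico_subset_Icc_self hs)).neg.mono (Ici_subset_Ici.2 hs.1)).liminf_right_slope_le hr)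
    le_rfl (fun s hs => by linarith [bound s hs]) b ⟨hab, le_rfl⟩
  rw [gronwallBound_of_K_ne_0 (neg_ne_zero.2 hc), neg_div_neg_eq] at h
  linarith

lemma exp_neg_le_one_sub_add_sq_div_two {u : ℝ} (hu : 0 ≤ u) : exp (-u) ≤ 1 - u + u ^ 2 / 2 := by
  have h := quadratic_le_exp_of_nonneg hu
  have hinv : exp (-u) * exp u = 1 := by rw [← exp_add, neg_add_cancel, exp_zero]
  nlinarith [exp_pos (-u), exp_pos u, sq_nonneg u, sq_nonneg (u * u)]

section Morse

variable {ε : ℝ}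

lemma Morse_neg (x : ℝ) : Morse ε (-x) = Morse ε x := by
  rw [Morse, Morse, abs_neg]

lemma Morse_of_nonneg {x : ℝ} (hx : 0 ≤ x) : Morse ε x = exp (-(x / ε)) / (2 * ε) := by
  rw [Morse, abs_of_nonneg hx, neg_div]
  ring

noncomputable def cellVelocity (ε p q r : ℝ) : ℝ :=
  (Morse ε (q - r) - Morse ε (p - r)) / (q - p)

lemma particleRHS_eq_sum_cellVelocity (N : ℕ) (y : ℕ → ℝ) (i : ℕ) :
    particleRHS ε N y i = (1 / N) * ∑ k ∈ Finset.range N, cellVelocity ε (y k) (y (k + 1)) (y i) :=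
  rfl

lemma cellVelocity_neg (p q r : ℝ) : cellVelocity ε (-q) (-p) (-r) = -cellVelocity ε p q r := by
  rw [cellVelocity, cellVelocity, ← Morse_neg (q - r), ← Morse_neg (p - r)]
  ring_nf

lemma exp_second_difference_ge (hε : 0 < ε) {p q r s : ℝ} (hpq : p ≤ q) (hrs : r ≤ s)
    (hsp : s ≤ p) :
    -((q - p) * (s - r) / ε ^ 2) ≤
      (exp (-((q - s) / ε)) - exp (-((p - s) / ε))) -
        (exp (-((q - r) / ε)) - exp (-((p - r) / ε))) := by
  set A := exp (-((p - s) / ε))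
  set E := exp (-((q - p) / ε))
  set F := exp (-((s - r) / ε))
  have hqs : exp (-((q - s) / ε)) = A * E := by rw [← exp_add]; congr 1; ring
  have hqr : exp (-((q - r) / ε)) = A * E * F := by rw [← exp_add, ← exp_add]; congr 1; ring
  have hpr : exp (-((p - r) / ε)) = A * F := by rw [← exp_add]; congr 1; ring
  have hA : A ≤ 1 := exp_le_one_iff.2 (by simp only [neg_nonpos]; positivity)
  have hE : 1 - E ≤ (q - p) / ε := by linarith [add_one_le_exp (-((q - p) / ε))]
  have hF : 1 - F ≤ (s - r) / ε := by linarith [add_one_le_exp (-((s - r) / ε))]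
  have hE0 : 0 ≤ 1 - E := sub_nonneg.2 (exp_le_one_iff.2 (by simp only [neg_nonpos]; positivity))
  have hF0 : 0 ≤ 1 - F := sub_nonneg.2 (exp_le_one_iff.2 (by simp only [neg_nonpos]; positivity))
  calc -((q - p) * (s - r) / ε ^ 2) = -((q - p) / ε * ((s - r) / ε)) := by ring
    _ ≤ -((1 - E) * (1 - F)) := neg_le_neg (mul_le_mul hE hF hF0 (by positivity))
    _ ≤ -(A * ((1 - E) * (1 - F))) := neg_le_neg (mul_le_of_le_one_left (mul_nonneg hE0 hF0) hA)
    _ = _ := by rw [hqs, hqr, hpr]; ring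

lemma cellVelocity_sub_ge_of_le (hε : 0 < ε) {p q r s : ℝ} (hpq : p < q) (hrs : r ≤ s)
    (hsp : s ≤ p) : -((s - r) / (2 * ε ^ 3)) ≤ cellVelocity ε p q s - cellVelocity ε p q r := by
  have hqp : 0 < q - p := sub_pos.2 hpq
  rw [cellVelocity, cellVelocity, div_sub_div_same, le_div_iff₀ hqp,
    Morse_of_nonneg (by linarith : 0 ≤ q - s), Morse_of_nonneg (by linarith : 0 ≤ p - s),
    Morse_of_nonneg (by linarith : 0 ≤ q - r), Morse_of_nonneg (by linarith : 0 ≤ p - r)]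
  calc -((s - r) / (2 * ε ^ 3)) * (q - p) = -((q - p) * (s - r) / ε ^ 2) / (2 * ε) := by
        field_simp
    _ ≤ ((exp (-((q - s) / ε)) - exp (-((p - s) / ε))) -
          (exp (-((q - r) / ε)) - exp (-((p - r) / ε)))) / (2 * ε) :=
        div_le_div_of_nonneg_right (exp_second_difference_ge hε hpq.le hrs hsp) (by positivity)
    _ = _ := by ring

lemma cellVelocity_sub_ge_of_disjoint (hε : 0 < ε) {p q r s : ℝ} (hpq : p < q) (hrs : r ≤ s)
    (hdisj : s ≤ p ∨ q ≤ r) :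
    -((s - r) / (2 * ε ^ 3)) ≤ cellVelocity ε p q s - cellVelocity ε p q r := by
  rcases hdisj with hsp | hqr
  · exact cellVelocity_sub_ge_of_le hε hpq hrs hsp
  · have h := cellVelocity_sub_ge_of_le hε (neg_lt_neg hpq) (neg_le_neg hrs) (neg_le_neg hqr)
    rw [cellVelocity_neg, cellVelocity_neg, neg_sub_neg] at h
    linarith

lemma cellVelocity_self_sub_ge (hε : 0 < ε) {r s : ℝ} (hrs : r < s) :
    1 / ε ^ 2 - (s - r) / (2 * ε ^ 3) ≤ cellVelocity ε r s s - cellVelocity ε r s r := by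
  have hd : 0 < s - r := sub_pos.2 hrs
  have hself : cellVelocity ε r s s - cellVelocity ε r s r =
      (1 - exp (-((s - r) / ε))) / (ε * (s - r)) := by
    rw [cellVelocity, cellVelocity, sub_self, sub_self, ← neg_sub s r, Morse_neg,
      Morse_of_nonneg le_rfl, Morse_of_nonneg hd.le, zero_div, neg_zero, exp_zero]
    field_simp
    ring
  rw [hself, le_div_iff₀ (by positivity)]
  calc (1 / ε ^ 2 - (s - r) / (2 * ε ^ 3)) * (ε * (s - r))
        = (s - r) / ε - ((s - r) / ε) ^ 2 / 2 := by field_simp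
    _ ≤ 1 - exp (-((s - r) / ε)) := by
        linarith [exp_neg_le_one_sub_add_sq_div_two (div_nonneg hd.le hε.le)]

end Morse

lemma particleRHS_succ_sub_ge {ε : ℝ} (hε : 0 < ε) {N i : ℕ} (y : ℕ → ℝ)
    (hy : ∀ j < N, y j < y (j + 1)) (hi : i < N) :
    1 / (N * ε ^ 2) - (y (i + 1) - y i) / (2 * ε ^ 3) ≤
      particleRHS ε N y (i + 1) - particleRHS ε N y i := by
  have hmono : StrictMonoOn y (Iic N) :=
    strictMonoOn_Iic_of_lt_succ fun m hm => by simpa only [Order.succ_eq_add_one] using hy m hm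
  have hterm : ∀ k ∈ Finset.range N,
      (if k = i then 1 / ε ^ 2 else 0) - (y (i + 1) - y i) / (2 * ε ^ 3) ≤
        cellVelocity ε (y k) (y (k + 1)) (y (i + 1)) - cellVelocity ε (y k) (y (k + 1)) (y i) := by
    intro k hk
    rw [Finset.mem_range] at hk
    split_ifs with hki
    · subst hki
      exact cellVelocity_self_sub_ge hε (hy k hk)
    · rw [zero_sub]
      refine cellVelocity_sub_ge_of_disjoint hε (hy k hk) (hy i hi).le ?_
      rcases Nat.lt_or_gt_of_ne hki with hlt | hgt
      · exact Or.inr (hmono.monotoneOn (mem_Iic.2 (by omega)) (mem_Iic.2 hi.le) hlt)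
      · exact Or.inl (hmono.monotoneOn (mem_Iic.2 (by omega)) (mem_Iic.2 hk.le) hgt)
  have hN : (0 : ℝ) < N := Nat.cast_pos.2 (i.zero_le.trans_lt hi)
  calc 1 / (N * ε ^ 2) - (y (i + 1) - y i) / (2 * ε ^ 3)
        = 1 / N * ∑ k ∈ Finset.range N,
            ((if k = i then 1 / ε ^ 2 else 0) - (y (i + 1) - y i) / (2 * ε ^ 3)) := by
        rw [Finset.sum_sub_distrib, Finset.sum_ite_eq', if_pos (Finset.mem_range.2 hi),
          Finset.sum_const, Finset.card_range, nsmul_eq_mul]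
        field_simp
    _ ≤ 1 / N * ∑ k ∈ Finset.range N,
          (cellVelocity ε (y k) (y (k + 1)) (y (i + 1)) - cellVelocity ε (y k) (y (k + 1)) (y i)) :=
        mul_le_mul_of_nonneg_left (Finset.sum_le_sum hterm) (by positivity)
    _ = _ := by
        rw [particleRHS_eq_sum_cellVelocity, particleRHS_eq_sum_cellVelocity,
          Finset.sum_sub_distrib, mul_sub]

theorem stmt3_general (ε : ℝ) (hε : 0 < ε) (N : ℕ) (x : ℝ → ℕ → ℝ)
    (hx : IsParticleSol ε N x) :
    (∀ t : ℝ, 0 ≤ t → ∀ i < N,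
      x t (i + 1) - x t i ≥
        (x 0 (i + 1) - x 0 i) * Real.exp (-t / (2 * ε ^ 3)) +
          (2 * ε / N) * (1 - Real.exp (-t / (2 * ε ^ 3)))) ∧
    (∀ t : ℝ, 0 ≤ t → ∀ i < N, 0 < x t (i + 1) - x t i) := by
  obtain ⟨hordered, hode⟩ := hx
  refine ⟨fun t ht i hi => ?_, fun t ht i hi => sub_pos.2 (hordered t ht i hi)⟩
  have hgap := exp_relaxation_le_of_hasDerivWithinAt (f := fun s => x s (i + 1) - x s i)
    (α := 1 / (N * ε ^ 2)) (c := 1 / (2 * ε ^ 3)) (by positivity) ht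
    (fun s hs => (hode (i + 1) hi s hs.1).sub (hode i hi.le s hs.1))
    (fun s hs => by
      simpa only [one_div_mul_eq_div] using particleRHS_succ_sub_ge hε (x s) (hordered s hs.1) hi)
  have hrate : -(1 / (2 * ε ^ 3)) * (t - 0) = -t / (2 * ε ^ 3) := by ring
  have hlimit : 1 / (N * ε ^ 2) / (1 / (2 * ε ^ 3)) = 2 * ε / N := by field_simp
  rwa [hrate, hlimit] at hgap

/-- Particles do not collide. For a strictly ordered particle
solution, `d_i(t) ≥ d_i(0) e^{-t/(2ε³)} + (2ε/N)(1 - e^{-t/(2ε³)})` for all `t ≥ 0`;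
in particular consecutive particles stay at positive distance at all finite times. -/
theorem stmt3 (ε : ℝ) (hε : 0 < ε) (N : ℕ) (hN : 1 ≤ N) (x : ℝ → ℕ → ℝ)
    (hx : IsParticleSol ε N x) :
    (∀ t : ℝ, 0 ≤ t → ∀ i < N,
      x t (i + 1) - x t i ≥
        (x 0 (i + 1) - x 0 i) * Real.exp (-t / (2 * ε ^ 3)) +
          (2 * ε / N) * (1 - Real.exp (-t / (2 * ε ^ 3)))) ∧
    (∀ t : ℝ, 0 ≤ t → ∀ i < N, 0 < x t (i + 1) - x t i) :=
  stmt3_general ε hε N x hx
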